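/- Let n ≥ 1 and k ≥ 1, and for each i = 1, …, k let a_i = (a_{i,1}, …, a_{i,n}) ∈ ℝⁿ satisfy 1 > a_{i,1} > a_{i,2} > ⋯ > a_{i,n} ≥ 0 (setting a_{i,0} := 1), with A_i the companion matrix of a_i. Let ε = max over 1 ≤ i ≤ k and 1 ≤ j ≤ n of a_{i,j} / a_{i,j−1} (all denominators are positive by the strict chain); then ε < 1 and every eigenvalue μ ∈ ℂ of the product A_k A_{k−1} ⋯ A_1, viewed as a matrix over ℂ, satisfies ‖μ‖ ≤ ε^k; in particular the spectral radius of A_k A_{k−1} ⋯ A_1 is at most ε^k < 1. -/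

import Mathlib

open Finset

/-- The companion matrix of a vector `a = (a 0, …, a (n-1))` (representing
`(a_{1}, …, a_{n})` in 1-indexed notation): superdiagonal of ones, last row
`(-a_n, -a_{n-1}, …, -a_1)`. -/
def companion (n : ℕ) (a : Fin n → ℝ) : Matrix (Fin n) (Fin n) ℝ :=
  Matrix.of fun j k =>
    if (j : ℕ) = n - 1 then -a k.rev
    else if (k : ℕ) = (j : ℕ) + 1 then 1 else 0

/-- `prodDesc A k = A k * A (k-1) * ⋯ * A 1`. -/
def prodDesc {m : ℕ} (A : ℕ → Matrix (Fin m) (Fin m) ℝ) : ℕ → Matrix (Fin m) (Fin m) ℝ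
  | 0 => 1
  | k + 1 => A (k + 1) * prodDesc A k

/-- The operator norm induced by the ℓ∞ norm: the maximum over rows of the ℓ¹ norm of
the row. -/
noncomputable def rowSumNorm {m : ℕ} (M : Matrix (Fin m) (Fin m) ℝ) : ℝ :=
  ⨆ j : Fin m, ∑ k : Fin m, |M j k|

/-!
Key's argument. Measure `u ∈ ℂⁿ` by the diameter of its partial sums `0, u₀, u₀ + u₁, …`.
If `1 ≥ c₁ ≥ ⋯ ≥ c_n ≥ 0`, the partial sums of `C u` (`C` the companion matrix of `c`) are,
after a translation, partial sums of `u` together with one extra point which by Abel summation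
is a convex combination of them; so `C` does not increase this diameter. Conjugating by
`diag(δ^j)` turns each `A_i` into `δ` times a companion matrix of this kind as soon as
`a_{i,j} ≤ δ a_{i,j-1}`, hence every eigenvalue of `A_k ⋯ A_1` has modulus at most `δ^k`;
let `δ ↓ ε`.
-/

open scoped Pointwise Matrix

namespace Fin

theorem partialSum_last {M : Type*} [AddCommMonoid M] {n : ℕ} (f : Fin n → M) :
    partialSum f (last n) = ∑ i, f i := by
  rw [partialSum, val_last, List.take_of_length_le (by simp), List.sum_ofFn]

theorem partialSum_smul {R M : Type*} [Monoid R] [AddMonoid M] [DistribMulAction R M] {n : ℕ}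
    (c : R) (f : Fin n → M) : partialSum (c • f) = c • partialSum f := by
  funext i
  induction i using Fin.induction with
  | zero => simp
  | succ i ih => simp [partialSum_succ, ih, smul_add]

end Fin

theorem sum_smul_mem_convexHull_range_partialSum {E : Type*} [AddCommGroup E] [Module ℝ E] :
    ∀ {n : ℕ} (f : Fin n → E) (w : Fin n → ℝ), Antitone w → (∀ i, 0 ≤ w i) → (∀ i, w i ≤ 1) →
      ∑ i, w i • f i ∈ convexHull ℝ (Set.range (Fin.partialSum f))
  | 0, f, _, _, _, _ => subset_convexHull ℝ _ ⟨0, by simp⟩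
  | n + 1, f, w, hw, hw0, hw1 => by
    have hzero : (0 : E) ∈ convexHull ℝ (Set.range (Fin.partialSum f)) :=
      subset_convexHull ℝ _ ⟨0, Fin.partialSum_zero f⟩
    rw [Fin.sum_univ_succ]
    rcases (hw0 0).eq_or_lt with h | h
    · have hw_eq : ∀ i, w i = 0 := fun i => le_antisymm (h ▸ hw (Fin.zero_le i)) (hw0 i)
      simpa [hw_eq] using hzero
    · have ih := sum_smul_mem_convexHull_range_partialSum (Fin.tail f) (fun i => w i.succ / w 0)
        (fun i j hij => div_le_div_of_nonneg_right (hw (Fin.succ_le_succ_iff.2 hij)) h.le)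
        (fun i => div_nonneg (hw0 _) h.le)
        (fun i => (div_le_one h).2 (hw (Fin.zero_le _)))
      have hshift : f 0 +ᵥ Set.range (Fin.partialSum (Fin.tail f)) ⊆
          Set.range (Fin.partialSum f) := by
        rintro _ ⟨_, ⟨i, rfl⟩, rfl⟩
        exact ⟨i.succ, Fin.partialSum_succ' f i⟩
      have hmem : f 0 + ∑ i, (w i.succ / w 0) • Fin.tail f i ∈
          convexHull ℝ (Set.range (Fin.partialSum f)) :=
        convexHull_mono hshift (by rw [convexHull_vadd]; exact Set.vadd_mem_vadd_set ih)
      convert convex_convexHull ℝ _ hzero hmem (sub_nonneg.2 (hw1 0)) h.le (by ring) using 1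
      simp [Fin.tail, Finset.smul_sum, smul_smul, mul_div_cancel₀ _ h.ne']

noncomputable def keyNorm {E : Type*} [SeminormedAddCommGroup E] {n : ℕ} (u : Fin n → E) : ℝ :=
  Metric.diam (Set.range (Fin.partialSum u))

section keyNorm

variable {E : Type*} {n : ℕ}

theorem norm_le_keyNorm [SeminormedAddCommGroup E] (u : Fin n → E) (i : Fin n) :
    ‖u i‖ ≤ keyNorm u := by
  have := Metric.dist_le_diam_of_mem (Set.finite_range (Fin.partialSum u)).isBounded
    (Set.mem_range_self i.succ) (Set.mem_range_self i.castSucc)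
  rwa [dist_eq_norm, Fin.partialSum_succ, add_sub_cancel_left] at this

theorem keyNorm_pos [NormedAddCommGroup E] {u : Fin n → E} (hu : u ≠ 0) : 0 < keyNorm u := by
  obtain ⟨i, hi⟩ := Function.ne_iff.1 hu
  exact (norm_pos_iff.2 hi).trans_le (norm_le_keyNorm u i)

theorem keyNorm_smul {𝕜 : Type*} [NormedField 𝕜] [SeminormedAddCommGroup E] [NormedSpace 𝕜 E]
    (c : 𝕜) (u : Fin n → E) : keyNorm (c • u) = ‖c‖ * keyNorm u := by
  rw [keyNorm, Fin.partialSum_smul, Pi.smul_def, Set.range_smul, diam_smul₀, keyNorm]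

end keyNorm

section Companion

variable {m : ℕ} (c : Fin (m + 1) → ℝ) (u : Fin (m + 1) → ℂ)

theorem companion_map_mulVec_castSucc (j : Fin m) :
    ((companion (m + 1) c).map (fun x : ℝ => (x : ℂ)) *ᵥ u) j.castSucc = u j.succ := by
  have hsucc : ∀ k : Fin (m + 1), (k : ℕ) = j + 1 ↔ k = j.succ := by simp [Fin.ext_iff]
  simp [companion, Matrix.mulVec, dotProduct, j.isLt.ne, hsucc, apply_ite (fun x : ℝ => (x : ℂ))]

theorem companion_map_mulVec_last :
    ((companion (m + 1) c).map (fun x : ℝ => (x : ℂ)) *ᵥ u) (Fin.last m) =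
      -∑ k, (c k.rev : ℂ) * u k := by
  simp [companion, Matrix.mulVec, dotProduct]

end Companion

theorem keyNorm_companion_mulVec_le {n : ℕ} {c : Fin n → ℝ} (hc : Antitone c)
    (hc0 : ∀ i, 0 ≤ c i) (hc1 : ∀ i, c i ≤ 1) (u : Fin n → ℂ) :
    keyNorm ((companion n c).map (fun x : ℝ => (x : ℂ)) *ᵥ u) ≤ keyNorm u := by
  cases n with
  | zero => rw [Subsingleton.elim (_ *ᵥ u) u]
  | succ m =>
  set w := (companion (m + 1) c).map (fun x : ℝ => (x : ℂ)) *ᵥ u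
  have hinit : Fin.init w = Fin.tail u := funext (companion_map_mulVec_castSucc c u)
  have hsub : u 0 +ᵥ Set.range (Fin.partialSum w) ⊆
      convexHull ℝ (Set.range (Fin.partialSum u)) := by
    rintro _ ⟨_, ⟨i, rfl⟩, rfl⟩
    induction i using Fin.lastCases with
    | last =>
      have hlast : u 0 + Fin.partialSum w (Fin.last (m + 1)) = ∑ k, (1 - c k.rev) • u k := by
        rw [← Fin.succ_last, Fin.partialSum_succ, ← Fin.partialSum_init, hinit,
          show w (Fin.last m) = _ from companion_map_mulVec_last c u, ← add_assoc,
          ← Fin.partialSum_succ', Fin.succ_last, Fin.partialSum_last]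
        simp only [← sub_eq_add_neg, Complex.real_smul, Complex.ofReal_sub, Complex.ofReal_one,
          sub_mul, one_mul, Finset.sum_sub_distrib]
      show u 0 + _ ∈ _
      rw [hlast]
      exact sum_smul_mem_convexHull_range_partialSum u _
        (fun i j hij => sub_le_sub_left (hc (Fin.rev_anti hij)) 1)
        (fun i => sub_nonneg.2 (hc1 _)) (fun i => sub_le_self 1 (hc0 _))
    | cast i =>
      show u 0 + _ ∈ _
      rw [← Fin.partialSum_init, hinit, ← Fin.partialSum_succ']
      exact subset_convexHull ℝ _ (Set.mem_range_self _)
  calc keyNorm w = Metric.diam (u 0 +ᵥ Set.range (Fin.partialSum w)) := (diam_vadd _ _).symm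
    _ ≤ Metric.diam (convexHull ℝ (Set.range (Fin.partialSum u))) :=
      Metric.diam_mono hsub (isBounded_convexHull.2 (Set.finite_range _).isBounded)
    _ = keyNorm u := convexHull_diam _

theorem Matrix.map_ofReal_mul {l m o : Type*} [Fintype m] (M : Matrix l m ℝ) (N : Matrix m o ℝ) :
    (M * N).map (fun x : ℝ => (x : ℂ)) =
      M.map (fun x : ℝ => (x : ℂ)) * N.map (fun x : ℝ => (x : ℂ)) :=
  Matrix.map_mul (f := Complex.ofRealHom)

theorem companion_mul_diagonal_pow {n : ℕ} {δ : ℝ} (hδ : δ ≠ 0) (a : Fin n → ℝ) :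
    companion n a * Matrix.diagonal (fun j : Fin n => δ ^ (j : ℕ)) =
      δ • (Matrix.diagonal (fun j : Fin n => δ ^ (j : ℕ)) *
        companion n (fun t => a t / δ ^ ((t : ℕ) + 1))) := by
  ext j l
  rw [Matrix.mul_diagonal, Matrix.smul_apply, Matrix.diagonal_mul]
  simp only [companion, Matrix.of_apply, smul_eq_mul]
  split_ifs with hj hl
  · have hexp : (l : ℕ) + ((l.rev : ℕ) + 1) = (j : ℕ) + 1 := by
      have := l.isLt; rw [Fin.val_rev]; omega
    rw [← mul_assoc, ← pow_succ', ← hexp, pow_add]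
    field_simp
  · rw [hl, pow_succ]
    ring
  · simp

theorem prodDesc_mul_eq_pow_smul {m : ℕ} {A B : ℕ → Matrix (Fin m) (Fin m) ℝ}
    {E : Matrix (Fin m) (Fin m) ℝ} {r : ℝ} (h : ∀ i, A i * E = r • (E * B i)) (k : ℕ) :
    prodDesc A k * E = r ^ k • (E * prodDesc B k) := by
  induction k with
  | zero => simp [prodDesc]
  | succ k ih =>
    rw [prodDesc, prodDesc, mul_assoc, ih, Matrix.mul_smul, ← mul_assoc, h, Matrix.smul_mul,
      smul_smul, mul_assoc, pow_succ]

theorem keyNorm_prodDesc_mulVec_le {m k : ℕ} {B : ℕ → Matrix (Fin m) (Fin m) ℝ}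
    (hB : ∀ i, 1 ≤ i → i ≤ k → ∀ u, keyNorm ((B i).map (fun x : ℝ => (x : ℂ)) *ᵥ u) ≤ keyNorm u)
    (u : Fin m → ℂ) : keyNorm ((prodDesc B k).map (fun x : ℝ => (x : ℂ)) *ᵥ u) ≤ keyNorm u := by
  induction k with
  | zero =>
    rw [prodDesc, Matrix.map_one _ Complex.ofReal_zero Complex.ofReal_one, Matrix.one_mulVec]
  | succ k ih =>
    rw [prodDesc, Matrix.map_ofReal_mul, ← Matrix.mulVec_mulVec]
    exact (hB _ le_add_self le_rfl _).trans (ih fun i h1 h2 => hB i h1 (h2.trans k.le_succ))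

theorem norm_eigenvalue_le_of_mul_eq_smul_mul {n : ℕ} {P E Q : Matrix (Fin n) (Fin n) ℝ} {r : ℝ}
    (hr : 0 ≤ r) (hE : E.det ≠ 0) (hPEQ : P * E = r • (E * Q))
    (hQ : ∀ u, keyNorm (Q.map (fun x : ℝ => (x : ℂ)) *ᵥ u) ≤ keyNorm u) {μ : ℂ}
    {v : Fin n → ℂ} (hv : v ≠ 0) (h : P.map (fun x : ℝ => (x : ℂ)) *ᵥ v = μ • v) :
    ‖μ‖ ≤ r := by
  set Ec := E.map (fun x : ℝ => (x : ℂ))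
  have hEc : IsUnit Ec := by
    have hdet : Ec.det = (E.det : ℂ) := (Complex.ofRealHom.map_det E).symm
    rw [Matrix.isUnit_iff_isUnit_det, hdet, isUnit_iff_ne_zero]
    exact_mod_cast hE
  obtain ⟨u, rfl⟩ := Matrix.mulVec_surjective_iff_isUnit.2 hEc v
  have hu : u ≠ 0 := by rintro rfl; exact hv (Matrix.mulVec_zero _)
  have heig : (r : ℂ) • (Q.map (fun x : ℝ => (x : ℂ)) *ᵥ u) = μ • u := by
    apply Matrix.mulVec_injective_iff_isUnit.2 hEc
    have hmap := congrArg (Matrix.map · fun x : ℝ => (x : ℂ)) hPEQ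
    simp only [Matrix.map_ofReal_mul, Matrix.map_smul' _ r _ Complex.ofReal_mul] at hmap
    rw [Matrix.mulVec_smul, Matrix.mulVec_smul, Matrix.mulVec_mulVec, ← Matrix.smul_mulVec, ← hmap,
      ← Matrix.mulVec_mulVec, h]
  have hbound : ‖μ‖ * keyNorm u ≤ r * keyNorm u :=
    calc ‖μ‖ * keyNorm u = keyNorm (μ • u) := (keyNorm_smul μ u).symm
      _ = r * keyNorm (Q.map (fun x : ℝ => (x : ℂ)) *ᵥ u) := by
        rw [← heig, keyNorm_smul, Complex.norm_real, Real.norm_of_nonneg hr]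
      _ ≤ r * keyNorm u := mul_le_mul_of_nonneg_left (hQ u) hr
  exact le_of_mul_le_mul_right hbound (keyNorm_pos hu)

theorem antitoneOn_div_pow {n : ℕ} {b : ℕ → ℝ} {δ : ℝ} (hδ : 0 < δ)
    (hb : ∀ j, 1 ≤ j → j ≤ n → b j ≤ δ * b (j - 1)) :
    AntitoneOn (fun j => b j / δ ^ j) (Set.Iic n) := by
  refine antitoneOn_of_succ_le Set.ordConnected_Iic fun j _ _ hj => ?_
  rw [Order.succ_eq_add_one, div_le_div_iff₀ (pow_pos hδ _) (pow_pos hδ _)]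
  calc b (j + 1) * δ ^ j ≤ δ * b j * δ ^ j :=
        mul_le_mul_of_nonneg_right (hb (j + 1) le_add_self hj) (pow_pos hδ _).le
    _ = b j * δ ^ (j + 1) := by ring

theorem norm_eigenvalue_prodDesc_companion_le_pow {n k : ℕ} {a : ℕ → ℕ → ℝ} {δ : ℝ}
    (hδ : 0 < δ) (ha0 : ∀ i, a i 0 = 1)
    (hle : ∀ i, 1 ≤ i → i ≤ k → ∀ j, 1 ≤ j → j ≤ n → a i j ≤ δ * a i (j - 1))
    (hnonneg : ∀ i, 1 ≤ i → i ≤ k → 0 ≤ a i n) {μ : ℂ} {v : Fin n → ℂ} (hv : v ≠ 0)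
    (h : (prodDesc (fun i => companion n fun j : Fin n => a i ((j : ℕ) + 1)) k).map
      (fun x : ℝ => (x : ℂ)) *ᵥ v = μ • v) :
    ‖μ‖ ≤ δ ^ k := by
  set E := Matrix.diagonal fun j : Fin n => δ ^ (j : ℕ)
  have hE : E.det ≠ 0 := by
    rw [Matrix.det_diagonal]
    exact Finset.prod_ne_zero_iff.2 fun j _ => pow_ne_zero _ hδ.ne'
  have hB : ∀ i, 1 ≤ i → i ≤ k → ∀ u, keyNorm ((companion n fun t : Fin n =>
      a i ((t : ℕ) + 1) / δ ^ ((t : ℕ) + 1)).map (fun x : ℝ => (x : ℂ)) *ᵥ u) ≤ keyNorm u := by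
    intro i hi1 hik
    have hanti := antitoneOn_div_pow hδ (hle i hi1 hik)
    have hmem : ∀ t : Fin n, (t : ℕ) + 1 ∈ Set.Iic n := fun t => t.isLt
    refine keyNorm_companion_mulVec_le ?_ (fun t => ?_) (fun t => ?_)
    · exact fun s t hst => hanti (hmem s) (hmem t) (by simpa using hst)
    · calc (0 : ℝ) ≤ a i n / δ ^ n := div_nonneg (hnonneg i hi1 hik) (pow_pos hδ _).le
        _ ≤ _ := hanti (hmem t) (Set.mem_Iic.2 le_rfl) (hmem t)
    · calc a i ((t : ℕ) + 1) / δ ^ ((t : ℕ) + 1) ≤ a i 0 / δ ^ 0 :=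
            hanti (Set.mem_Iic.2 (Nat.zero_le n)) (hmem t) (Nat.zero_le _)
        _ = 1 := by rw [ha0, pow_zero, div_one]
  exact norm_eigenvalue_le_of_mul_eq_smul_mul (by positivity) hE
    (prodDesc_mul_eq_pow_smul (fun i => companion_mul_diagonal_pow hδ.ne' _) k)
    (keyNorm_prodDesc_mulVec_le hB) hv h

theorem stmt_16_general (n : ℕ) (k : ℕ) (a : ℕ → ℕ → ℝ)
    (ha0 : ∀ i : ℕ, a i 0 = 1)
    (hchain : ∀ i : ℕ, 1 ≤ i → i ≤ k → ∀ j : ℕ, 1 ≤ j → j ≤ n → a i j < a i (j - 1))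
    (hnonneg : ∀ i : ℕ, 1 ≤ i → i ≤ k → 0 ≤ a i n)
    (ε : ℝ)
    (hε : IsGreatest
      {x : ℝ | ∃ i, 1 ≤ i ∧ i ≤ k ∧ ∃ j, 1 ≤ j ∧ j ≤ n ∧ x = a i j / a i (j - 1)} ε) :
    ε < 1 ∧
      ∀ (μ : ℂ) (v : Fin n → ℂ), v ≠ 0 →
        Matrix.mulVec
          ((prodDesc (fun i => companion n (fun j : Fin n => a i ((j : ℕ) + 1))) k).map
            (fun x : ℝ => (x : ℂ))) v = μ • v →
        ‖μ‖ ≤ ε ^ k := by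
  have hanti : ∀ i, 1 ≤ i → i ≤ k → StrictAntiOn (a i) (Set.Iic n) := fun i hi1 hik =>
    strictAntiOn_Iic_of_succ_lt fun m hm => by simpa using hchain i hi1 hik (m + 1) le_add_self hm
  have hpos : ∀ i, 1 ≤ i → i ≤ k → ∀ j, j < n → 0 < a i j := fun i hi1 hik j hj =>
    (hnonneg i hi1 hik).trans_lt <| hanti i hi1 hik (Set.mem_Iic.2 hj.le) (Set.mem_Iic.2 le_rfl) hj
  have hle : ∀ i, 1 ≤ i → i ≤ k → ∀ j, 1 ≤ j → j ≤ n → a i j ≤ ε * a i (j - 1) :=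
    fun i hi1 hik j hj1 hjn => (div_le_iff₀ (hpos i hi1 hik (j - 1) (by omega))).1
      (hε.2 ⟨i, hi1, hik, j, hj1, hjn, rfl⟩)
  obtain ⟨i, hi1, hik, j, hj1, hjn, hεij⟩ := hε.1
  have hden := hpos i hi1 hik (j - 1) (by omega)
  have hε0 : 0 ≤ ε := hεij ▸ div_nonneg ((hnonneg i hi1 hik).trans <|
    (hanti i hi1 hik).antitoneOn (Set.mem_Iic.2 hjn) (Set.mem_Iic.2 le_rfl) hjn) hden.le
  refine ⟨hεij ▸ (div_lt_one hden).2 (hchain i hi1 hik j hj1 hjn), fun μ v hv h => ?_⟩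
  -- `ε` itself may vanish (`n = 1`, `a i 1 = 0`), where the conjugation degenerates.
  have hbound : ∀ δ > ε, ‖μ‖ ≤ δ ^ k := fun δ hδ =>
    norm_eigenvalue_prodDesc_companion_le_pow (hε0.trans_lt hδ) ha0
      (fun i hi1 hik j hj1 hjn => (hle i hi1 hik j hj1 hjn).trans <|
        mul_le_mul_of_nonneg_right hδ.le (hpos i hi1 hik (j - 1) (by omega)).le)
      hnonneg hv h
  exact ge_of_tendsto (((continuous_pow k).tendsto ε).mono_left nhdsWithin_le_nhds)
    (eventually_nhdsWithin_of_forall (s := Set.Ioi ε) hbound)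

/-- Lemma 4 of the paper (Key's spectral-radius bound for products of companion
matrices with strictly decreasing nonnegative coefficient chains). Coefficients are
given as `a i j` for `1 ≤ j ≤ n`, with the convention `a i 0 = 1`. -/
theorem stmt_16 (n : ℕ) (hn : 1 ≤ n) (k : ℕ) (hk : 1 ≤ k) (a : ℕ → ℕ → ℝ)
    (ha0 : ∀ i : ℕ, a i 0 = 1)
    (hchain : ∀ i : ℕ, 1 ≤ i → i ≤ k → ∀ j : ℕ, 1 ≤ j → j ≤ n → a i j < a i (j - 1))
    (hnonneg : ∀ i : ℕ, 1 ≤ i → i ≤ k → 0 ≤ a i n)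
    (ε : ℝ)
    (hε : IsGreatest
      {x : ℝ | ∃ i, 1 ≤ i ∧ i ≤ k ∧ ∃ j, 1 ≤ j ∧ j ≤ n ∧ x = a i j / a i (j - 1)} ε) :
    ε < 1 ∧
      ∀ (μ : ℂ) (v : Fin n → ℂ), v ≠ 0 →
        Matrix.mulVec
          ((prodDesc (fun i => companion n (fun j : Fin n => a i ((j : ℕ) + 1))) k).map
            (fun x : ℝ => (x : ℂ))) v = μ • v →
        ‖μ‖ ≤ ε ^ k :=
  stmt_16_general n k a ha0 hchain hnonneg ε hε
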